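/- arXiv:math/0610759 — 3 statements merged into one kernel-verified Lean document; each statement's English description precedes it below -/
import Mathlib

section
/- Define the (code-based) busy beaver function B : ℕ → ℕ by B(n) = max over all codes e ≤ n with φ_e(0) defined of the number of computation steps for φ_e(0) to converge (and B(n) = 0 if no such e exists). Then B dominates every total computable function: for every total computable f and all sufficiently large n, B(n) > f(n). -/
open Nat.Partrec (Code)
open scoped Classical

/-- The halting time of code `e` on input `0`: the least number of steps `k`
such that the step-bounded evaluation `evaln k e 0` converges (`0` if it never
converges). -/
noncomputable def haltTime (e : ℕ) : ℕ :=
  sInf {k : ℕ | (Nat.Partrec.Code.evaln k (Denumerable.ofNat Code e) 0).isSome}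

/-- The (code-based) busy beaver function: `B n` is the maximum, over all codes
`e ≤ n` such that `φ_e(0)` is defined, of the halting time of `e` on input `0`
(and `0` if no such `e` exists). -/
noncomputable def busyBeaver (n : ℕ) : ℕ :=
  ((Finset.range (n + 1)).filter
    (fun e => ((Denumerable.ofNat Code e).eval 0).Dom)).sup haltTime

open Nat.Partrec.Code in
/-- If `zero.comp c` halts on `0` within `t` steps, then `c` halts on `0`
within `t` steps with a value `< t`. -/
lemma evaln_comp_zero_aux {c : Code} {t : ℕ}
    (h : (evaln t (Code.zero.comp c) 0).isSome) :
    ∃ y, y ∈ evaln t c 0 ∧ y < t := by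
  rcases Option.isSome_iff_exists.1 h with ⟨x, hx⟩
  match t with
  | 0 => simp [evaln] at hx
  | s + 1 =>
    simp only [evaln, Option.bind_eq_some_iff, Option.guard_eq_some_iff, Nat.zero_le, true_and,
      Option.pure_def, Option.bind_eq_bind] at hx
    obtain ⟨_, _, y, hy, _, hle, -⟩ := hx
    rw [Option.guard_eq_some'] at hle
    exact ⟨y, hy, Nat.lt_succ_of_le hle⟩

open Nat.Partrec.Code in
lemma encode_comp_lt_right (a : Code) {b b' : Code}
    (h : Encodable.encode b < Encodable.encode b') :
    Encodable.encode (a.comp b) < Encodable.encode (a.comp b') := by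
  simp only [encodeCode_eq, encodeCode] at h ⊢
  have := Nat.pair_lt_pair_right (encodeCode a) h
  omega

/-- Running maximum of `f`. -/
def runMax (f : ℕ → ℕ) : ℕ → ℕ := fun n => Nat.rec (f 0) (fun k acc => max acc (f (k + 1))) n

lemma runMax_computable {f : ℕ → ℕ} (hf : Computable f) : Computable (runMax f) :=
  Computable.nat_rec Computable.id (Computable.const (f 0))
    ((Primrec.nat_max.to_comp.comp (Computable.snd.comp Computable.snd)
      (hf.comp (Computable.succ.comp (Computable.fst.comp Computable.snd)))).to₂)

lemma le_runMax {f : ℕ → ℕ} : ∀ {i n : ℕ}, i ≤ n → f i ≤ runMax f n := by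
  intro i n
  induction n with
  | zero => intro h; interval_cases i; exact le_refl _
  | succ n ih =>
    intro h
    rcases Nat.lt_succ_iff_lt_or_eq.1 (Nat.lt_succ_of_le h) with h' | rfl
    · exact le_trans (ih (Nat.lt_succ_iff.1 h')) (le_max_left _ _)
    · exact le_max_right _ _

/-- The code `zero.comp (c.comp (const k))`. -/
def EcAux (c : Code) (k : ℕ) : Code := Code.zero.comp (c.comp (Code.const k))

set_option maxHeartbeats 1000000 in
/-- The busy beaver function dominates every total computable function. -/
theorem busyBeaver_dominates_computable (f : ℕ → ℕ) (hf : Computable f) :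
    ∃ N, ∀ n ≥ N, busyBeaver n > f n := by
  classical
  open Nat.Partrec.Code in
  have hprim : Primrec fun p : Code × ℕ =>
      Encodable.encode (EcAux p.1 (p.2 + 1)) :=
    Primrec.encode.comp <| primrec₂_comp.comp (Primrec.const Code.zero)
      (primrec₂_comp.comp Primrec.fst (primrec_const.comp (Primrec.succ.comp Primrec.snd)))
  have hG : Partrec₂ fun (c : Code) (k : ℕ) =>
      (Part.some (runMax f (Encodable.encode (EcAux c (k + 1)))) : Part ℕ) := by
    have h2 : Computable₂ fun (c : Code) (k : ℕ) =>
        runMax f (Encodable.encode (EcAux c (k + 1))) :=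
      (runMax_computable hf).comp hprim.to_comp
    exact h2.partrec₂
  obtain ⟨c, hc⟩ := fixed_point₂ hG
  set E : ℕ → ℕ := fun k => Encodable.encode (EcAux c k) with hE
  have hc' : ∀ k : ℕ, c.eval k = Part.some (runMax f (E (k + 1))) := fun k => congrFun hc k
  have hEmono : StrictMono E := by
    apply strictMono_nat_of_lt_succ
    intro k
    apply encode_comp_lt_right
    apply encode_comp_lt_right
    exact (encode_lt_comp Code.succ (Code.const k)).2
  have heval1 : ∀ k : ℕ, (c.comp (Code.const k)).eval 0 = Part.some (runMax f (E (k + 1))) := by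
    intro k
    simp [Code.eval, eval_const, hc' k]
    exact (Part.bind_some k c.eval).trans (hc' k)
  have hevalE : ∀ k : ℕ, (EcAux c k).eval 0 = Part.some 0 := by
    intro k
    show (Code.zero.comp (c.comp (Code.const k))).eval 0 = Part.some 0
    simp [Code.eval, eval_const, hc' k]
    show ((Part.some k).bind c.eval).bind (pure 0 : ℕ →. ℕ) = _
    exact (congrArg (fun p => Part.bind p (pure 0 : ℕ →. ℕ))
      ((Part.bind_some k c.eval).trans (hc' k))).trans (Part.bind_some _ _)
  refine ⟨E 0, fun n hn => ?_⟩
  set k := Nat.findGreatest (fun k => E k ≤ n) n with hk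
  have hk1 : E k ≤ n := Nat.findGreatest_spec (P := fun k => E k ≤ n) (Nat.zero_le n) hn
  have hk2 : n < E (k + 1) := by
    by_cases h : k + 1 ≤ n
    · exact lt_of_not_ge (Nat.findGreatest_is_greatest (P := fun k => E k ≤ n) (Nat.lt_succ_self k) h)
    · exact lt_of_lt_of_le (lt_of_not_ge h) hEmono.le_apply
  set en := Encodable.encode (EcAux c k) with hen
  have hofNat : (Denumerable.ofNat Code en) = EcAux c k := Denumerable.ofNat_encode _
  have hS : {t : ℕ | (evaln t (Denumerable.ofNat Code en) 0).isSome}.Nonempty := by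
    have h0 : (0 : ℕ) ∈ (EcAux c k).eval 0 := by rw [hevalE k]; exact Part.mem_some 0
    obtain ⟨t, ht⟩ := evaln_complete.1 h0
    exact ⟨t, by rw [Set.mem_setOf_eq, hofNat]; exact Option.isSome_iff_exists.2 ⟨0, ht⟩⟩
  have hmem := Nat.sInf_mem hS
  rw [Set.mem_setOf_eq, hofNat] at hmem
  obtain ⟨y, hy, hyt⟩ := evaln_comp_zero_aux hmem
  have hy' : y ∈ (c.comp (Code.const k)).eval 0 := evaln_sound hy
  rw [heval1 k, Part.mem_some_iff] at hy'
  rw [hy'] at hyt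
  have hht : runMax f (E (k + 1)) < haltTime en := by
    unfold haltTime
    rw [hofNat]
    exact hyt
  have hBB : haltTime en ≤ busyBeaver n := by
    apply Finset.le_sup
    rw [Finset.mem_filter, Finset.mem_range]
    refine ⟨Nat.lt_succ_of_le hk1, ?_⟩
    rw [hofNat, hevalE k]
    trivial
  calc f n ≤ runMax f (E (k + 1)) := le_runMax hk2.le
    _ < haltTime en := hht
    _ ≤ busyBeaver n := hBB
end

section
/- The halting problem is Turing reducible to the busy beaver function: if an oracle computes B(n) for every n, then one can decide whether a given code e halts on input 0. Concretely: φ_e(0) halts if and only if φ_e(0) halts within B(e) steps. -/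
open Nat.Partrec (Code)
open scoped Classical

namespace Nat.Partrec.Code

theorem eval_dom_iff_exists_evaln_isSome {c : Code} {n : ℕ} :
    (c.eval n).Dom ↔ ∃ k, (c.evaln k n).isSome := by
  simp only [Part.dom_iff_mem, evaln_complete, Option.isSome_iff_exists]
  exact exists_comm

theorem evaln_isSome_mono {c : Code} {n k₁ k₂ : ℕ} (hk : k₁ ≤ k₂)
    (h : (c.evaln k₁ n).isSome) : (c.evaln k₂ n).isSome := by
  obtain ⟨x, hx⟩ := Option.isSome_iff_exists.1 h
  exact Option.isSome_iff_exists.2 ⟨x, evaln_mono hk hx⟩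

end Nat.Partrec.Code

open Nat.Partrec.Code

theorem evaln_haltTime_isSome {e : ℕ} (h : ((Denumerable.ofNat Code e).eval 0).Dom) :
    (evaln (haltTime e) (Denumerable.ofNat Code e) 0).isSome :=
  Nat.sInf_mem (eval_dom_iff_exists_evaln_isSome.1 h)

theorem haltTime_le_busyBeaver {e n : ℕ} (he : e ≤ n)
    (h : ((Denumerable.ofNat Code e).eval 0).Dom) : haltTime e ≤ busyBeaver n :=
  Finset.le_sup (Finset.mem_filter.2 ⟨Finset.mem_range.2 (Nat.lt_succ_of_le he), h⟩)

/-- The halting problem (on input `0`) is decidable from the busy beaver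
function: `φ_e(0)` halts if and only if `φ_e(0)` halts within `B(e)` steps. -/
theorem halting_reducible_to_busyBeaver (e : ℕ) :
    ((Denumerable.ofNat Code e).eval 0).Dom ↔
      (Nat.Partrec.Code.evaln (busyBeaver e) (Denumerable.ofNat Code e) 0).isSome :=
  ⟨fun h => evaln_isSome_mono (haltTime_le_busyBeaver le_rfl h) (evaln_haltTime_isSome h),
    fun h => eval_dom_iff_exists_evaln_isSome.2 ⟨_, h⟩⟩
end

section
/- Marker lemma: Consider infinitely many markers initially at positions 1, 2, 3, ... on ℕ, moved in stages by the rule that whenever a marker moves, it jumps to the current position of the next marker, which in turn jumps to the position of the following marker, and so on (all markers with larger index shift accordingly). Let W be the set of positions eventually vacated by all markers. Then ℕ \ W is finite if and only if some marker moves infinitely often; and if N₀ is the least index of a marker that moves infinitely often, then |ℕ \ W| = N₀ - 1. -/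
open scoped Classical

/-- Positions of the markers. `markerPos T s i` is the position of marker `i`
(markers are indexed by `1, 2, 3, …`) after stage `s`, where `T i s` means that
marker `i` is triggered to move at stage `s`. Initially marker `i` rests on
cell `i`. At each stage, every triggered marker jumps to the current position
of the next marker, which in turn jumps to the position of the following
marker, and so on (all markers of larger index shift accordingly, these shifts
being independent of their own triggering); thus after stage `s + 1` marker `i`
sits where marker `i + #{t ≤ i : T t (s+1)}` sat after stage `s`. -/
noncomputable def markerPos (T : ℕ → ℕ → Prop) : ℕ → ℕ → ℕ
  | 0, i => i
  | s + 1, i =>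
      markerPos T s (i + ((Finset.Icc 1 i).filter (fun t => T t (s + 1))).card)

/-- Marker `i` moves infinitely often. -/
def MovesInfinitely (T : ℕ → ℕ → Prop) (i : ℕ) : Prop :=
  {s : ℕ | markerPos T (s + 1) i ≠ markerPos T s i}.Infinite

/-- The set `W` of positions eventually vacated by all markers. -/
def markerW (T : ℕ → ℕ → Prop) : Set ℕ :=
  {p | ∃ s₀, ∀ s ≥ s₀, ∀ i, 1 ≤ i → markerPos T s i ≠ p}

/-!
Every marker stays to the right of its predecessor, so a position is occupied forever exactly
when, from some stage on, one and the same marker rests on it: the index of the marker sitting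
on a permanently occupied cell can only decrease, hence settles. Marker `i` moves at a stage
iff some marker `t ≤ i` is triggered there, so the markers that move infinitely often form an
up-set `{i | N₀ ≤ i}`. The permanently occupied cells are therefore the (distinct) final
positions of the markers `1, …, N₀ - 1`, or of all markers if none moves infinitely often.
-/

open Filter

namespace MarkerLemma

variable (T : ℕ → ℕ → Prop)

noncomputable def triggeredBelow (s i : ℕ) : ℕ :=
  ((Finset.Icc 1 i).filter (fun t => T t s)).card

lemma markerPos_succ (s i : ℕ) :
    markerPos T (s + 1) i = markerPos T s (i + triggeredBelow T (s + 1) i) := rfl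

lemma triggeredBelow_mono (s : ℕ) : Monotone (triggeredBelow T s) := fun _ _ hij =>
  Finset.card_le_card (Finset.filter_subset_filter _ (Finset.Icc_subset_Icc_right hij))

lemma strictMono_markerPos (s : ℕ) : StrictMono (markerPos T s) := by
  induction s with
  | zero => exact strictMono_id
  | succ s ih =>
    intro i j hij
    rw [markerPos_succ, markerPos_succ]
    exact ih (Nat.add_lt_add_of_lt_of_le hij (triggeredBelow_mono T _ hij.le))

lemma markerPos_succ_ne_iff (s i : ℕ) :
    markerPos T (s + 1) i ≠ markerPos T s i ↔ triggeredBelow T (s + 1) i ≠ 0 := by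
  rw [markerPos_succ, (strictMono_markerPos T s).injective.ne_iff]
  omega

lemma movesInfinitely_mono : Monotone (MovesInfinitely T) := fun i j hij hi =>
  hi.mono fun s hs => by
    rw [Set.mem_ofPred_eq, markerPos_succ_ne_iff] at hs ⊢
    have := triggeredBelow_mono T (s + 1) hij
    omega

/-- The final position of marker `j` (junk if marker `j` moves infinitely often). -/
noncomputable def limitPos (j : ℕ) : ℕ :=
  Classical.epsilon fun p => ∀ᶠ s in atTop, markerPos T s j = p

lemma not_movesInfinitely_iff (j : ℕ) :
    ¬ MovesInfinitely T j ↔ ∃ p, ∀ᶠ s in atTop, markerPos T s j = p := by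
  rw [MovesInfinitely, ← Nat.frequently_atTop_iff_infinite, not_frequently]
  simp only [not_not]
  exact (eventually_atTop.trans eventuallyConst_atTop_nat.symm).trans
    (eventuallyConst_iff_exists_eventuallyEq (f := fun s => markerPos T s j))

variable {T}

lemma eventually_markerPos_eq_limitPos {j : ℕ} (hj : ¬ MovesInfinitely T j) :
    ∀ᶠ s in atTop, markerPos T s j = limitPos T j :=
  Classical.epsilon_spec ((not_movesInfinitely_iff T j).mp hj)

lemma limitPos_eq {j p : ℕ} (h : ∀ᶠ s in atTop, markerPos T s j = p) : limitPos T j = p := by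
  obtain ⟨s, hs, hs'⟩ := ((eventually_markerPos_eq_limitPos
    ((not_movesInfinitely_iff T j).mpr ⟨p, h⟩)).and h).exists
  rw [← hs, hs']

variable (T)

def occupied (s : ℕ) : Set ℕ := markerPos T s '' Set.Ici 1

lemma occupied_zero : occupied T 0 = Set.Ici 1 := Set.image_id' _

lemma occupied_antitone : Antitone (occupied T) := by
  refine antitone_nat_of_succ_le fun s => ?_
  rintro _ ⟨i, hi, rfl⟩
  exact ⟨i + triggeredBelow T (s + 1) i, Set.mem_Ici.mpr (le_add_right hi), rfl⟩

lemma compl_markerW : (markerW T)ᶜ = ⋂ s, occupied T s := by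
  ext p
  simp only [markerW, occupied, Set.mem_compl_iff, Set.mem_ofPred_eq, Set.mem_iInter,
    Set.mem_image, Set.mem_Ici, not_exists, not_forall, not_not, exists_prop]
  refine ⟨fun h s => ?_, fun h s₀ => ⟨s₀, le_rfl, h s₀⟩⟩
  obtain ⟨s', hs', hp⟩ := h s
  exact occupied_antitone T hs' hp

lemma setOf_notMem_markerW : {p | 1 ≤ p ∧ p ∉ markerW T} = ⋂ s, occupied T s := by
  ext p
  rw [Set.mem_ofPred_eq, ← Set.mem_compl_iff, compl_markerW, and_iff_right_iff_imp]
  intro hp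
  simpa only [occupied_zero, Set.mem_Ici] using Set.mem_iInter.mp hp 0

def settledMarkers : Set ℕ := {j | 1 ≤ j ∧ ¬ MovesInfinitely T j}

lemma strictMonoOn_limitPos : StrictMonoOn (limitPos T) (settledMarkers T) := by
  intro i hi j hj hij
  obtain ⟨s, hsi, hsj⟩ :=
    ((eventually_markerPos_eq_limitPos hi.2).and (eventually_markerPos_eq_limitPos hj.2)).exists
  rw [← hsi, ← hsj]
  exact strictMono_markerPos T s hij

lemma limitPos_mem_occupied {j : ℕ} (hj : j ∈ settledMarkers T) (s : ℕ) :
    limitPos T j ∈ occupied T s := by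
  obtain ⟨s', hs', hj'⟩ :=
    ((eventually_ge_atTop s).and (eventually_markerPos_eq_limitPos hj.2)).exists
  exact occupied_antitone T hs' ⟨j, hj.1, hj'⟩

lemma exists_limitPos_eq {p : ℕ} (hp : p ∈ ⋂ s, occupied T s) :
    ∃ j ∈ settledMarkers T, limitPos T j = p := by
  choose f hf1 hfp using Set.mem_iInter.mp hp
  have hf : Antitone f := antitone_nat_of_succ_le fun s => by
    have h := (hfp (s + 1)).trans (hfp s).symm
    rw [markerPos_succ, (strictMono_markerPos T s).injective.eq_iff] at h
    omega
  obtain ⟨n, hn⟩ := WellFoundedLT.antitone_chain_condition hf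
  have hj : ∀ᶠ s in atTop, markerPos T s (f n) = p :=
    eventually_atTop.mpr ⟨n, fun s hs => hn s hs ▸ hfp s⟩
  exact ⟨f n, ⟨hf1 n, (not_movesInfinitely_iff T _).mpr ⟨p, hj⟩⟩, limitPos_eq hj⟩

lemma iInter_occupied : ⋂ s, occupied T s = limitPos T '' settledMarkers T := by
  ext p
  refine ⟨exists_limitPos_eq T, ?_⟩
  rintro ⟨j, hj, rfl⟩
  exact Set.mem_iInter.mpr (limitPos_mem_occupied T hj)

lemma settledMarkers_eq_Ico {N₀ : ℕ}
    (hN : IsLeast {i | 1 ≤ i ∧ MovesInfinitely T i} N₀) : settledMarkers T = Set.Ico 1 N₀ := by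
  ext j
  simp only [settledMarkers, Set.mem_ofPred_eq, Set.mem_Ico, and_congr_right_iff]
  intro hj
  constructor
  · exact fun h => lt_of_not_ge fun hNj => h (movesInfinitely_mono T hNj hN.1.2)
  · exact fun h hjN => (hN.2 ⟨hj, hjN⟩).not_gt h

lemma settledMarkers_finite_iff :
    (settledMarkers T).Finite ↔ ∃ i, 1 ≤ i ∧ MovesInfinitely T i := by
  constructor
  · intro hfin
    by_contra! h
    exact Set.Ici_infinite 1 (hfin.subset fun j hj => ⟨hj, h j hj⟩)
  · intro h
    rw [settledMarkers_eq_Ico T (isLeast_csInf h)]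
    exact Set.finite_Ico 1 _

end MarkerLemma

open MarkerLemma

theorem marker_lemma_general (T : ℕ → ℕ → Prop) :
    ({p : ℕ | 1 ≤ p ∧ p ∉ markerW T}.Finite ↔
      ∃ i, 1 ≤ i ∧ MovesInfinitely T i) ∧
    ∀ N₀ : ℕ, IsLeast {i : ℕ | 1 ≤ i ∧ MovesInfinitely T i} N₀ →
      {p : ℕ | 1 ≤ p ∧ p ∉ markerW T}.ncard = N₀ - 1 := by
  rw [setOf_notMem_markerW, iInter_occupied]
  have hinj := (strictMonoOn_limitPos T).injOn
  refine ⟨(Set.finite_image_iff hinj).trans (settledMarkers_finite_iff T), fun N₀ hN => ?_⟩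
  rw [hinj.ncard_image, settledMarkers_eq_Ico T hN, ← Finset.coe_Ico,
    Set.ncard_coe_finset, Nat.card_Ico]

/-- Marker lemma (Proposition 3.3 of the paper): for any triggering rule `T`
(where marker `i` may be triggered at stage `s` only if `i ≤ s`), the
complement `ℕ \ W` (within the cells `1, 2, 3, …`) is finite if and only if
some marker moves infinitely often; and if `N₀` is the least index of a marker
moving infinitely often, then `|ℕ \ W| = N₀ - 1`. -/
theorem marker_lemma (T : ℕ → ℕ → Prop) (hT : ∀ i s, T i s → 1 ≤ i ∧ i ≤ s) :
    ({p : ℕ | 1 ≤ p ∧ p ∉ markerW T}.Finite ↔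
      ∃ i, 1 ≤ i ∧ MovesInfinitely T i) ∧
    ∀ N₀ : ℕ, IsLeast {i : ℕ | 1 ≤ i ∧ MovesInfinitely T i} N₀ →
      {p : ℕ | 1 ≤ p ∧ p ∉ markerW T}.ncard = N₀ - 1 :=
  marker_lemma_general T
end
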